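/- Let p be a prime and let A = (A,·,∘) be a finite skew brace whose order is a power of p, and suppose the homomorphism λ is non-trivial (i.e., λ_a ≠ id for some a ∈ A). Then there exists a ∈ A with λ_a ≠ id such that λ_{λ_a(b)} = λ_a ∘ λ_b ∘ λ_a⁻¹ for all b ∈ A; consequently λ_a is a non-identity element of Aut(A). -/

import Mathlib

/-! The permutations `x ↦ a · λ_c x` of `A` form the image `P` of `A ⋊_λ (A, ∘)`, a
`p`-group. It contains the left regular representation `L` of `(A, ∘)`, and properly so: a
non-trivial `λ_a` lies in `P` and fixes `1`, while no non-trivial element of `L` does. By the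
normalizer condition in `P` some element of `P \ L` normalizes `L`; after multiplying it by an
element of `L` it becomes some `λ_e`, still outside `L`. A permutation of a group that fixes `1`
and normalizes its left regular representation is an automorphism, so `λ_e` preserves `∘` as
well as `·`, and a map preserving both operations commutes with `λ` in the sense
`f (λ_t w) = λ_{f t} (f w)`. -/

/-- A skew brace structure on a group `A` (whose given group operation `*` plays the
role of the "additive" operation `·`): a second group operation `circ` with the same
identity element `1`, satisfying the brace relation
`a ∘ (b · c) = (a ∘ b) · a⁻¹ · (a ∘ c)`. -/
structure SkewBraceStruct (A : Type*) [Group A] where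
  circ : A → A → A
  circInv : A → A
  circ_assoc : ∀ a b c, circ (circ a b) c = circ a (circ b c)
  one_circ : ∀ a, circ 1 a = a
  circ_one : ∀ a, circ a 1 = a
  circInv_circ : ∀ a, circ (circInv a) a = 1
  brace : ∀ a b c, circ a (b * c) = circ a b * a⁻¹ * circ a c

/-- `f` is an automorphism of the skew brace: a bijection that is an automorphism of
both `(A, ·)` and `(A, ∘)`. -/
def SkewBraceStruct.IsAut {A : Type*} [Group A] (S : SkewBraceStruct A) (f : A → A) : Prop :=
  Function.Bijective f ∧ (∀ a b, f (a * b) = f a * f b) ∧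
    (∀ a b, f (S.circ a b) = S.circ (f a) (f b))


/-- The map `λ_a : b ↦ a⁻¹ · (a ∘ b)`. -/
def SkewBraceStruct.lam {A : Type*} [Group A] (S : SkewBraceStruct A) (a b : A) : A :=
  a⁻¹ * S.circ a b

/-- The map `ρ_a : b ↦ (a ∘ b) · a⁻¹`. -/
def SkewBraceStruct.rho {A : Type*} [Group A] (S : SkewBraceStruct A) (a b : A) : A :=
  S.circ a b * a⁻¹

theorem IsPGroup.exists_mem_normalizer_notMem_of_lt {G : Type*} [Group G] {p : ℕ} [Fact p.Prime]
    {H P : Subgroup G} [Finite P] (hP : IsPGroup p P) (hHP : H < P) :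
    ∃ x ∈ P, x ∈ Subgroup.normalizer (H : Set G) ∧ x ∉ H := by
  have := hP.isNilpotent
  have hne : H.subgroupOf P ≠ ⊤ := by
    rw [Ne, Subgroup.subgroupOf_eq_top]
    exact hHP.not_ge
  obtain ⟨y, hyN, hyH⟩ :=
    SetLike.exists_of_lt (Group.normalizerCondition_of_isNilpotent _ hne.lt_top)
  rw [← Subgroup.subgroupOf_normalizer_eq hHP.le] at hyN
  exact ⟨y, y.2, hyN, hyH⟩

theorem Equiv.Perm.map_mul_of_mem_normalizer_range_toPermHom {G : Type*} [Group G]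
    {f : Equiv.Perm G}
    (hf : f ∈ Subgroup.normalizer ((MulAction.toPermHom G G).range : Set (Equiv.Perm G)))
    (hf1 : f 1 = 1) (x y : G) : f (x * y) = f x * f y := by
  obtain ⟨z, hz⟩ := (Subgroup.mem_normalizer_iff.mp hf _).mp ⟨x, rfl⟩
  have hconj (w : G) : f (x * w) = z * f w := by
    simpa using (DFunLike.congr_fun hz (f w)).symm
  have hz : z = f x := by simpa [hf1] using (hconj 1).symm
  rw [hconj, hz]

namespace SkewBraceStruct

variable {A : Type*} [Group A] (S : SkewBraceStruct A)

theorem circ_circInv (a : A) : S.circ a (S.circInv a) = 1 := by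
  have h := S.circInv_circ (S.circInv a)
  calc S.circ a (S.circInv a)
      = S.circ (S.circ (S.circInv (S.circInv a)) (S.circInv a)) (S.circ a (S.circInv a)) := by
        rw [h, S.one_circ]
    _ = S.circ (S.circInv (S.circInv a)) (S.circ (S.circ (S.circInv a) a) (S.circInv a)) := by
        simp only [S.circ_assoc]
    _ = 1 := by rw [S.circInv_circ, S.one_circ, h]

theorem circ_eq_mul_lam (a b : A) : S.circ a b = a * S.lam a b := by
  simp [lam]

theorem lam_one (a : A) : S.lam a 1 = 1 := by
  simp [lam, S.circ_one]

theorem lam_one_left (b : A) : S.lam 1 b = b := by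
  simp [lam, S.one_circ]

theorem lam_mul (a b c : A) : S.lam a (b * c) = S.lam a b * S.lam a c := by
  simp only [lam, S.brace]; group

theorem lam_circ (a b c : A) : S.lam (S.circ a b) c = S.lam a (S.lam b c) := by
  have h : S.circ a b⁻¹ * a⁻¹ = a * (S.circ a b)⁻¹ := by
    have := S.brace a b⁻¹ b
    rw [inv_mul_cancel, S.circ_one] at this
    exact eq_mul_inv_of_mul_eq this.symm
  simp only [lam, S.brace, S.circ_assoc, ← mul_assoc]
  rw [mul_assoc a⁻¹, h]
  group

theorem lam_circInv_lam (a b : A) : S.lam (S.circInv a) (S.lam a b) = b := by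
  rw [← S.lam_circ, S.circInv_circ, S.lam_one_left]

theorem lam_lam_circInv (a b : A) : S.lam a (S.lam (S.circInv a) b) = b := by
  rw [← S.lam_circ, S.circ_circInv, S.lam_one_left]

def CircGroup (_ : SkewBraceStruct A) : Type _ := A

instance : Group S.CircGroup where
  mul := S.circ
  one := (1 : A)
  inv := S.circInv
  mul_assoc := S.circ_assoc
  one_mul := S.one_circ
  mul_one := S.circ_one
  inv_mul_cancel := S.circInv_circ

def lamAut : S.CircGroup →* MulAut A where
  toFun a :=
    { toFun := S.lam a
      invFun := S.lam (S.circInv a)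
      left_inv := S.lam_circInv_lam a
      right_inv := S.lam_lam_circInv a
      map_mul' := S.lam_mul a }
  map_one' := MulEquiv.ext S.lam_one_left
  map_mul' a b := MulEquiv.ext (S.lam_circ a b)

def holAct : A ⋊[S.lamAut] S.CircGroup →* Equiv.Perm A :=
  SemidirectProduct.lift (MulAction.toPermHom A A) ((MulAut.toPerm A).comp S.lamAut) fun c => by
    ext a x
    change S.lamAut c a * x = S.lamAut c (a * (S.lamAut c).symm x)
    rw [map_mul, MulEquiv.apply_symm_apply]

theorem holAct_apply (q : A ⋊[S.lamAut] S.CircGroup) (x : A) :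
    S.holAct q x = q.left * S.lam q.right x := rfl

def circLeft : S.CircGroup →* Equiv.Perm A := MulAction.toPermHom S.CircGroup S.CircGroup

theorem circLeft_apply (c x : A) : S.circLeft c x = S.circ c x := rfl

theorem holAct_mk_self (c : A) : S.holAct ⟨c, c⟩ = S.circLeft c := by
  ext x
  rw [holAct_apply, circLeft_apply, circ_eq_mul_lam]

theorem holAct_eq_circLeft_mul (q : A ⋊[S.lamAut] S.CircGroup) :
    S.holAct q =
      S.circLeft q.left * MulAut.toPerm A (S.lamAut (S.circ (S.circInv q.left) q.right)) := by
  -- retyping `c : S.CircGroup` as `c : A` keeps the goal well-typed for rewriting with `A`-lemmas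
  rcases q with ⟨b, (c : A)⟩
  ext x
  change b * S.lam c x = S.circ b (S.lam (S.circ (S.circInv b) c) x)
  rw [circ_eq_mul_lam, ← S.lam_circ, ← S.circ_assoc, S.circ_circInv, S.one_circ]

theorem isPGroup_range_holAct {p n : ℕ} (hcard : Nat.card A = p ^ n) :
    IsPGroup p S.holAct.range := by
  have hSD : IsPGroup p (A ⋊[S.lamAut] S.CircGroup) := by
    refine IsPGroup.of_card (n := n + n) ?_
    rw [SemidirectProduct.card, pow_add, ← hcard]
    rfl
  exact hSD.of_surjective _ S.holAct.rangeRestrict_surjective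

theorem eq_one_of_mem_range_circLeft {f : Equiv.Perm A} (hf : f ∈ S.circLeft.range)
    (hf1 : f 1 = 1) : f = 1 := by
  rcases hf with ⟨(c : A), rfl⟩
  have hc : c = 1 := (S.circ_one c).symm.trans hf1
  rw [hc]
  exact map_one _

theorem range_circLeft_lt_range_holAct {a : A} (ha : S.lam a ≠ id) :
    S.circLeft.range < S.holAct.range := by
  refine SetLike.lt_iff_le_and_exists.mpr
    ⟨?_, MulAut.toPerm A (S.lamAut a), ⟨⟨1, a⟩, ?_⟩, ?_⟩
  · rintro _ ⟨c, rfl⟩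
    exact ⟨⟨c, c⟩, S.holAct_mk_self c⟩
  · ext x
    exact one_mul _
  · intro h
    exact ha (congrArg DFunLike.coe (S.eq_one_of_mem_range_circLeft h (S.lam_one a)))

theorem exists_lamAut_mem_normalizer_notMem [Finite A] {p n : ℕ} [Fact p.Prime]
    (hcard : Nat.card A = p ^ n) {a : A} (ha : S.lam a ≠ id) :
    ∃ e : A, MulAut.toPerm A (S.lamAut e) ∈ Subgroup.normalizer (S.circLeft.range : Set _) ∧
      MulAut.toPerm A (S.lamAut e) ∉ S.circLeft.range := by
  obtain ⟨_, ⟨q, rfl⟩, hqN, hqL⟩ :=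
    (S.isPGroup_range_holAct hcard).exists_mem_normalizer_notMem_of_lt
      (S.range_circLeft_lt_range_holAct ha)
  have hL : S.circLeft q.left ∈ S.circLeft.range := ⟨_, rfl⟩
  rw [S.holAct_eq_circLeft_mul] at hqN hqL
  refine ⟨S.circ (S.circInv q.left) q.right, ?_, fun h => hqL (mul_mem hL h)⟩
  simpa using mul_mem (inv_mem (Subgroup.le_normalizer hL)) hqN

theorem lam_apply_circ_of_mem_normalizer {e : A}
    (he : MulAut.toPerm A (S.lamAut e) ∈ Subgroup.normalizer (S.circLeft.range : Set _))
    (t w : A) : S.lam e (S.circ t w) = S.circ (S.lam e t) (S.lam e w) :=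
  Equiv.Perm.map_mul_of_mem_normalizer_range_toPermHom (G := S.CircGroup) he (S.lam_one e) t w

theorem map_lam {f : A → A} (hmul : ∀ a b, f (a * b) = f a * f b)
    (hcirc : ∀ a b, f (S.circ a b) = S.circ (f a) (f b)) (t w : A) :
    f (S.lam t w) = S.lam (f t) (f w) := by
  let F : A →* A := MonoidHom.mk' f hmul
  change F (t⁻¹ * S.circ t w) = (F t)⁻¹ * S.circ (F t) (F w)
  rw [map_mul, map_inv]
  exact congrArg _ (hcirc t w)

end SkewBraceStruct

/-- If `A` is a finite skew brace of `p`-power order with `λ` non-trivial, then there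
exists `a ∈ A` with `λ_a ≠ id` such that `λ_{λ_a(b)} = λ_a ∘ λ_b ∘ λ_a⁻¹` for all `b`;
consequently `λ_a` is a non-identity element of `Aut(A)`. -/
theorem ppower_lam_nontrivial_aut {A : Type*} [Group A] [Finite A] (S : SkewBraceStruct A)
    (p : ℕ) (hp : p.Prime) (hcard : ∃ n : ℕ, Nat.card A = p ^ n)
    (hlam : ∃ a : A, S.lam a ≠ id) :
    ∃ a : A, S.lam a ≠ id ∧
      (∀ b, S.lam (S.lam a b) = S.lam a ∘ S.lam b ∘ Function.invFun (S.lam a)) ∧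
      S.IsAut (S.lam a) := by
  have := Fact.mk hp
  obtain ⟨n, hn⟩ := hcard
  obtain ⟨a, ha⟩ := hlam
  obtain ⟨e, heN, heL⟩ := S.exists_lamAut_mem_normalizer_notMem hn ha
  have hcirc := S.lam_apply_circ_of_mem_normalizer heN
  have hbij : Function.Bijective (S.lam e) := (S.lamAut e).bijective
  refine ⟨e, fun h => heL ?_, fun b => ?_, hbij, S.lam_mul e, hcirc⟩
  · rw [show MulAut.toPerm A (S.lamAut e) = 1 from Equiv.ext (congrFun h)]
    exact one_mem _
  · funext x
    obtain ⟨y, rfl⟩ := hbij.2 x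
    simp only [Function.comp_apply, Function.leftInverse_invFun hbij.1 y,
      S.map_lam (S.lam_mul e) hcirc]
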